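/- arXiv:1708.05472 — 4 statements merged into one kernel-verified Lean document; each statement's English description precedes it below -/
import Mathlib

section
/- Fix an integer k ≥ 2, let c = 2 + (k−2)·4^{1/3} (with 4^{1/3} the real cube root of 4), and define t* ∈ ℝ^k by t*_1 = t*_k = 1/c and t*_i = 4^{1/3}/c for all 1 < i < k. Then t*_i > 0 for all i, Σ_{i=1}^k t*_i = 1, and for every t ∈ ℝ^k with t_i > 0 for all i and Σ_{i=1}^k t_i = 1 one has g(t) ≥ g(t*), where g(t) = π²(1/(4t_1²) + 1/t_2² + 1/t_3² + ⋯ + 1/t_{k−1}² + 1/(4t_k²)), with equality if and only if t = t*. In particular, for k ≥ 3 the ratio of an interior to a boundary component length is t*_2/t*_1 = 4^{1/3}, independent of k. -/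
open Finset

/-!
Each summand `a / t ^ 2` is strictly convex in `t > 0`, so it lies above its tangent line at
`s`, touching it only at `t = s`. At `t*` the slopes `-2 a_i / t*_i ^ 3` of these tangent lines
agree for all `i` (for `a = 1/4` at the ends and `a = 1` inside this forces the ratio `4^(1/3)`),
so summing the tangent inequalities the linear terms cancel on the hyperplane `∑ t_i = 1`.
-/

theorem div_sq_sub_tangent_eq (a : ℝ) {s t : ℝ} (hs : s ≠ 0) (ht : t ≠ 0) :
    a / t ^ 2 - a / s ^ 2 + 2 * a / s ^ 3 * (t - s) =
      a * (s - t) ^ 2 * (s + 2 * t) / (t ^ 2 * s ^ 3) := by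
  field_simp
  ring

theorem div_sq_sub_tangent_nonneg {a s t : ℝ} (ha : 0 ≤ a) (hs : 0 < s) (ht : 0 < t) :
    0 ≤ a / t ^ 2 - a / s ^ 2 + 2 * a / s ^ 3 * (t - s) := by
  rw [div_sq_sub_tangent_eq a hs.ne' ht.ne']
  positivity

theorem div_sq_sub_tangent_eq_zero_iff {a s t : ℝ} (ha : 0 < a) (hs : 0 < s) (ht : 0 < t) :
    a / t ^ 2 - a / s ^ 2 + 2 * a / s ^ 3 * (t - s) = 0 ↔ t = s := by
  have hst : 0 < s + 2 * t := by positivity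
  rw [div_sq_sub_tangent_eq a hs.ne' ht.ne', div_eq_zero_iff, or_iff_left (by positivity), mul_eq_zero, mul_eq_zero,
    or_iff_right ha.ne', or_iff_left hst.ne', pow_eq_zero_iff two_ne_zero, sub_eq_zero, eq_comm]

/-- The hypothesis `hμ` is the Lagrange condition for minimizing `∑ a i / t i ^ 2` on the
hyperplane `∑ t i = ∑ s i`. -/
theorem sum_div_sq_le_and_eq_iff {ι : Type*} [Fintype ι] {a s t : ι → ℝ} {μ : ℝ}
    (ha : ∀ i, 0 < a i) (hs : ∀ i, 0 < s i) (ht : ∀ i, 0 < t i)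
    (hμ : ∀ i, 2 * a i / s i ^ 3 = μ) (hst : ∑ i, t i = ∑ i, s i) :
    ∑ i, a i / s i ^ 2 ≤ ∑ i, a i / t i ^ 2 ∧
      (∑ i, a i / t i ^ 2 = ∑ i, a i / s i ^ 2 ↔ t = s) := by
  set gap : ι → ℝ := fun i => a i / t i ^ 2 - a i / s i ^ 2 + 2 * a i / s i ^ 3 * (t i - s i)
  have hgap_sum : ∑ i, a i / t i ^ 2 - ∑ i, a i / s i ^ 2 = ∑ i, gap i := by
    simp only [gap, hμ, sum_add_distrib, sum_sub_distrib, ← mul_sum, hst]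
    ring
  have hgap_nonneg : ∀ i ∈ univ, 0 ≤ gap i :=
    fun i _ => div_sq_sub_tangent_nonneg (ha i).le (hs i) (ht i)
  refine ⟨sub_nonneg.1 (hgap_sum ▸ sum_nonneg hgap_nonneg), ?_⟩
  rw [← sub_eq_zero, hgap_sum, sum_eq_zero_iff_of_nonneg hgap_nonneg, funext_iff]
  simp only [mem_univ, true_implies, gap, div_sq_sub_tangent_eq_zero_iff (ha _) (hs _) (ht _)]

theorem Fin.sum_ite_val_eq_zero_or_last {R : Type*} [Ring R] {k : ℕ} (hk : 2 ≤ k) (x y : R) :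
    ∑ i : Fin k, (if i.val = 0 ∨ i.val = k - 1 then x else y) = 2 * x + ((k : R) - 2) * y := by
  have hends : #{i : Fin k | i.val = 0 ∨ i.val = k - 1} = 2 := by
    rw [show ({i : Fin k | i.val = 0 ∨ i.val = k - 1} : Finset (Fin k)) =
        {⟨0, by omega⟩, ⟨k - 1, by omega⟩} by ext i; simp [Fin.ext_iff]]
    rw [card_pair]
    simp only [ne_eq, Fin.mk.injEq]
    omega
  have hinterior : #{i : Fin k | ¬(i.val = 0 ∨ i.val = k - 1)} = k - 2 := by
    have := card_filter_add_card_filter_not (s := univ)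
      (fun i : Fin k => i.val = 0 ∨ i.val = k - 1)
    rw [card_univ, Fintype.card_fin] at this
    omega
  rw [sum_ite, Finset.sum_const, Finset.sum_const, hends, hinterior, nsmul_eq_mul, nsmul_eq_mul,
    Nat.cast_sub hk]
  norm_num

theorem cbrt_four_pow_three : ((4 : ℝ) ^ ((1 : ℝ) / 3)) ^ 3 = 4 := by
  rw [one_div]
  exact_mod_cast Real.rpow_inv_natCast_pow (by norm_num : (0 : ℝ) ≤ 4) three_ne_zero

noncomputable def zarembaWeight (k : ℕ) (i : Fin k) : ℝ :=
  if i.val = 0 ∨ i.val = k - 1 then 1 / 4 else 1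

theorem zarembaWeight_pos (k : ℕ) (i : Fin k) : 0 < zarembaWeight k i := by
  unfold zarembaWeight
  split_ifs <;> norm_num

theorem sum_zarembaWeight_div_sq (k : ℕ) (t : Fin k → ℝ) :
    ∑ i, zarembaWeight k i / t i ^ 2 =
      ∑ i : Fin k, (if i.val = 0 ∨ i.val = k - 1 then 1 / (4 * t i ^ 2) else 1 / t i ^ 2) := by
  refine sum_congr rfl fun i _ => ?_
  unfold zarembaWeight
  split_ifs <;> ring

theorem two_mul_zarembaWeight_div_pow_three {k : ℕ} {c : ℝ} (hc : c ≠ 0) (i : Fin k) :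
    2 * zarembaWeight k i /
        (if i.val = 0 ∨ i.val = k - 1 then 1 / c else (4 : ℝ) ^ ((1 : ℝ) / 3) / c) ^ 3 =
      c ^ 3 / 2 := by
  unfold zarembaWeight
  split_ifs
  · field_simp
    ring
  · rw [div_pow, cbrt_four_pow_three]
    field_simp
    ring

/-- the unique Zaremba partition of the unit interval into `k ≥ 2`
pieces has boundary pieces of length `1/c` and interior pieces of length
`4^(1/3)/c` where `c = 2 + (k-2)·4^(1/3)`; moreover `t*₂/t*₁ = 4^(1/3)`. -/
theorem zaremba_interval_partition (k : ℕ) (hk : 2 ≤ k)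
    (c : ℝ) (hc : c = 2 + ((k : ℝ) - 2) * (4 : ℝ) ^ ((1 : ℝ) / 3))
    (tstar : Fin k → ℝ)
    (htstar : ∀ i : Fin k, tstar i =
      if i.val = 0 ∨ i.val = k - 1 then 1 / c else (4 : ℝ) ^ ((1 : ℝ) / 3) / c)
    (g : (Fin k → ℝ) → ℝ)
    (hg : ∀ t : Fin k → ℝ, g t = Real.pi ^ 2 *
      ∑ i : Fin k, (if i.val = 0 ∨ i.val = k - 1
        then 1 / (4 * (t i) ^ 2) else 1 / (t i) ^ 2)) :
    (∀ i, 0 < tstar i) ∧ (∑ i, tstar i = 1) ∧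
    (∀ t : Fin k → ℝ, (∀ i, 0 < t i) → (∑ i, t i = 1) →
      (g tstar ≤ g t ∧ (g t = g tstar ↔ t = tstar))) ∧
    (∀ h3 : 3 ≤ k,
      tstar ⟨1, by omega⟩ / tstar ⟨0, by omega⟩ = (4 : ℝ) ^ ((1 : ℝ) / 3)) := by
  have hc_pos : 0 < c := by
    have : (2 : ℝ) ≤ k := by exact_mod_cast hk
    rw [hc]
    positivity
  have htstar_pos : ∀ i, 0 < tstar i := fun i => by
    rw [htstar i]
    split_ifs <;> positivity
  have htstar_sum : ∑ i, tstar i = 1 := by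
    simp only [htstar, Fin.sum_ite_val_eq_zero_or_last hk]
    field_simp
    linarith
  have hg_weight : ∀ t, g t = Real.pi ^ 2 * ∑ i, zarembaWeight k i / t i ^ 2 := fun t => by
    rw [hg, sum_zarembaWeight_div_sq]
  have hslope : ∀ i, 2 * zarembaWeight k i / tstar i ^ 3 = c ^ 3 / 2 := fun i => by
    rw [htstar i]
    exact two_mul_zarembaWeight_div_pow_three hc_pos.ne' i
  refine ⟨htstar_pos, htstar_sum, fun t ht_pos ht_sum => ?_, fun h3 => ?_⟩
  · obtain ⟨hle, heq⟩ := sum_div_sq_le_and_eq_iff (zarembaWeight_pos k) htstar_pos ht_pos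
      hslope (ht_sum.trans htstar_sum.symm)
    rw [hg_weight, hg_weight, mul_right_inj' (by positivity), heq]
    exact ⟨by gcongr, Iff.rfl⟩
  · rw [htstar, htstar, if_neg (show ¬(1 = 0 ∨ 1 = k - 1) by omega), if_pos (Or.inl rfl)]
    field_simp
end

section
/- Let p ≥ 1, let d ≥ 1, and let Ω ⊆ ℝ^d be a Borel set. Let μ and μ_n (n ∈ ℕ) be Borel probability measures on ℝ^d, let f : ℝ^d → ℝ be Borel measurable with ∫ |f|^p dμ < ∞, and let f_n : ℝ^d → ℝ be Borel measurable with ∫ |f_n|^p dμ_n < ∞ for each n. Assume μ(∂Ω) = 0, where ∂Ω is the topological boundary of Ω, and assume that d_{TL^p}((μ_n, f_n), (μ, f)) → 0 as n → ∞. Then d_{TL^p}((μ_n, f_n·χ_Ω), (μ, f·χ_Ω)) → 0 as n → ∞, where χ_Ω is the indicator function of Ω. -/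
open MeasureTheory ENNReal Filter

noncomputable def TLpDist {E F : Type*} [MeasurableSpace E] [PseudoMetricSpace E]
    [NormedAddCommGroup F] (p : ℝ)
    (μ ν : Measure E) (f g : E → F) : ℝ≥0∞ :=
  ⨅ π : {π : Measure (E × E) // IsProbabilityMeasure π ∧
      π.map Prod.fst = μ ∧ π.map Prod.snd = ν},
    (∫⁻ z, ENNReal.ofReal (dist z.1 z.2 ^ p + ‖f z.1 - g z.2‖ ^ p)
      ∂(π : Measure (E × E))) ^ (1 / p)

/-!
Fix a coupling `π` of `μₙ` and `μ` of small cost. Restricting to `Ω` changes the integrand only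
at pairs `(x, y)` separated by `Ω`, and there `|χ_Ω fₙ(x) - χ_Ω f(y)|^p ≤ 2^(p-1) (|fₙ(x) - f(y)|^p
+ |f(y)|^p)`. A separated pair either has `|x - y| ≥ δ`, a set of small `π`-mass by Markov's
inequality, or has `y` within `δ` of `∂Ω`, a set of small mass because `μ(∂Ω) = 0`. As the second
marginal of `π` is `μ`, truncating `|f|^p` at a level `m` makes its integral over sets of small
`π`-mass small uniformly in `π`.
-/

open Set Metric Topology

section Truncation

variable {X Y : Type*} [MeasurableSpace X] [MeasurableSpace Y]

theorem setLIntegral_le_mul_measure_add_setLIntegral_gt {π : Measure X} {h : X → ℝ≥0∞}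
    (hh : Measurable h) (s : Set X) (m : ℝ≥0∞) :
    ∫⁻ x in s, h x ∂π ≤ m * π s + ∫⁻ x in {x | m < h x}, h x ∂π := by
  have hle : ∀ x, h x ≤ m + {x | m < h x}.indicator h x := fun x => by
    by_cases hx : m < h x
    · simp [indicator_of_mem (show x ∈ {x | m < h x} from hx)]
    · simp [not_lt.1 hx]
  calc ∫⁻ x in s, h x ∂π ≤ ∫⁻ x in s, (m + {x | m < h x}.indicator h x) ∂π := lintegral_mono hle
    _ = m * π s + ∫⁻ x in s, {x | m < h x}.indicator h x ∂π := by
        rw [lintegral_add_left measurable_const, setLIntegral_const, mul_comm]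
    _ ≤ m * π s + ∫⁻ x in {x | m < h x}, h x ∂π := by
        rw [← lintegral_indicator (measurableSet_lt measurable_const hh)]
        gcongr
        exact Measure.restrict_le_self

theorem tendsto_setLIntegral_gt_atTop_zero {μ : Measure Y} {g : Y → ℝ≥0∞} (hg : Measurable g)
    (hgi : ∫⁻ y, g y ∂μ ≠ ∞) :
    Tendsto (fun m : ℕ => ∫⁻ y in {y | (m : ℝ≥0∞) < g y}, g y ∂μ) atTop (𝓝 0) := by
  have hlim : ∀ᵐ y ∂μ, Tendsto (fun m : ℕ => {y | (m : ℝ≥0∞) < g y}.indicator g y) atTop (𝓝 0) := by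
    filter_upwards [ae_lt_top hg hgi] with y hy
    obtain ⟨k, hk⟩ := ENNReal.exists_nat_gt hy.ne
    refine tendsto_const_nhds.congr' ?_
    filter_upwards [eventually_ge_atTop k] with m hm
    exact (indicator_of_notMem (s := {y | (m : ℝ≥0∞) < g y})
      (not_lt.2 (hk.le.trans (Nat.cast_le.2 hm))) g).symm
  simpa [lintegral_indicator (measurableSet_lt measurable_const hg)] using
    tendsto_lintegral_of_dominated_convergence g
      (fun m => hg.indicator (measurableSet_lt measurable_const hg))
      (fun m => ae_of_all _ fun y => indicator_le_self _ _ y) hgi hlim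

theorem exists_pos_forall_setLIntegral_comp_lt {μ : Measure Y} {g : Y → ℝ≥0∞} (hg : Measurable g)
    (hgi : ∫⁻ y, g y ∂μ ≠ ∞) {φ : X → Y} (hφ : Measurable φ) {ε : ℝ≥0∞} (hε : ε ≠ 0) :
    ∃ κ > 0, ∀ π : Measure X, π.map φ = μ → ∀ s, π s < κ → ∫⁻ x in s, g (φ x) ∂π < ε := by
  obtain ⟨m, hm⟩ := ((tendsto_setLIntegral_gt_atTop_zero hg hgi).eventually
    (gt_mem_nhds (ENNReal.half_pos hε))).exists
  refine ⟨ε / 2 / m, ENNReal.div_pos (ENNReal.half_pos hε).ne' (natCast_ne_top m),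
    fun π hπ s hs => ?_⟩
  calc ∫⁻ x in s, g (φ x) ∂π ≤ m * π s + ∫⁻ x in φ ⁻¹' {y | (m : ℝ≥0∞) < g y}, g (φ x) ∂π :=
        setLIntegral_le_mul_measure_add_setLIntegral_gt (hg.comp hφ) s m
    _ = m * π s + ∫⁻ y in {y | (m : ℝ≥0∞) < g y}, g y ∂μ := by
        rw [← hπ, setLIntegral_map (measurableSet_lt measurable_const hg) hg hφ]
    _ < ε / 2 + ε / 2 := ENNReal.add_lt_add (ENNReal.mul_lt_of_lt_div' hs) hm
    _ = ε := ENNReal.add_halves ε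

end Truncation

section Geometry

variable {E : Type*} [NormedAddCommGroup E] [NormedSpace ℝ E]

/-- Crossing `∂Ω` on the segment from `x` to `y` puts `y` within `dist x y` of `∂Ω`. -/
theorem mem_iff_mem_of_dist_le_of_notMem_cthickening {Ω : Set E} {x y : E} {δ : ℝ}
    (hxy : dist x y ≤ δ) (hy : y ∉ cthickening δ (frontier Ω)) : x ∈ Ω ↔ y ∈ Ω := by
  let γ : unitInterval → E := fun t => AffineMap.lineMap x y (t : ℝ)
  have hγ : Continuous γ := (AffineMap.lineMap_continuous).comp continuous_subtype_val
  have crossing : ∀ a b, γ a ∈ Ω → γ b ∉ Ω → False := by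
    intro a b ha hb
    obtain ⟨t, ht⟩ : (frontier (γ ⁻¹' Ω)).Nonempty :=
      nonempty_frontier_iff.2 ⟨⟨a, ha⟩, fun h => hb (show b ∈ γ ⁻¹' Ω from h ▸ mem_univ b)⟩
    refine hy (mem_cthickening_of_dist_le y (γ t) δ _ (hγ.frontier_preimage_subset Ω ht) ?_)
    calc dist y (γ t) = ‖1 - (t : ℝ)‖ * dist x y := by rw [dist_comm, dist_lineMap_right]
      _ ≤ 1 * dist x y := by
          gcongr
          rw [Real.norm_of_nonneg (sub_nonneg.2 t.2.2)]
          linarith [t.2.1]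
      _ ≤ δ := by rwa [one_mul]
  have h0 : γ 0 = x := AffineMap.lineMap_apply_zero x y
  have h1 : γ 1 = y := AffineMap.lineMap_apply_one x y
  constructor
  · exact fun hx => by_contra fun hy' => crossing 0 1 (h0 ▸ hx) (h1 ▸ hy')
  · exact fun hy' => by_contra fun hx => crossing 1 0 (h1 ▸ hy') (h0 ▸ hx)

end Geometry

theorem exists_pos_measure_cthickening_lt {α : Type*} [PseudoMetricSpace α] [MeasurableSpace α]
    [OpensMeasurableSpace α] {μ : Measure α} [IsFiniteMeasure μ] {s : Set α} (hs : IsClosed s)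
    (hμs : μ s = 0) {ε : ℝ≥0∞} (hε : 0 < ε) : ∃ δ > 0, μ (cthickening δ s) < ε := by
  have h := tendsto_measure_cthickening_of_isClosed ⟨1, one_pos, measure_ne_top μ _⟩ hs
  rw [hμs] at h
  obtain ⟨δ, hδε, hδ⟩ :=
    (((h.mono_left nhdsWithin_le_nhds).eventually (gt_mem_nhds hε)).and
      (self_mem_nhdsWithin : Ioi (0 : ℝ) ∈ 𝓝[>] 0)).exists
  exact ⟨δ, hδ, hδε⟩

section Integrand

variable {E F : Type*} [NormedAddCommGroup F]

theorem enorm_indicator_sub_indicator_le {Ω : Set E} {T : Set (E × E)}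
    (hT : ∀ z ∉ T, (z.1 ∈ Ω ↔ z.2 ∈ Ω)) (u v : E → F) (z : E × E) :
    ‖Ω.indicator u z.1 - Ω.indicator v z.2‖ₑ
      ≤ ‖u z.1 - v z.2‖ₑ + T.indicator (fun z => ‖v z.2‖ₑ) z := by
  by_cases hz : z ∈ T
  · rw [indicator_of_mem hz]
    by_cases h1 : z.1 ∈ Ω <;> by_cases h2 : z.2 ∈ Ω <;> simp [h1, h2]
    simpa using enorm_add_le (u z.1 - v z.2) (v z.2)
  · have := hT z hz
    by_cases h1 : z.1 ∈ Ω <;> simp_all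

variable [PseudoMetricSpace E]

def IsCoupling [MeasurableSpace E] (π : Measure (E × E)) (μ ν : Measure E) : Prop :=
  IsProbabilityMeasure π ∧ π.map Prod.fst = μ ∧ π.map Prod.snd = ν

noncomputable def tlpIntegrand (p : ℝ) (f g : E → F) (z : E × E) : ℝ≥0∞ :=
  ENNReal.ofReal (dist z.1 z.2 ^ p + ‖f z.1 - g z.2‖ ^ p)

theorem tlpIntegrand_eq {p : ℝ} (hp : 0 ≤ p) (f g : E → F) (z : E × E) :
    tlpIntegrand p f g z = edist z.1 z.2 ^ p + ‖f z.1 - g z.2‖ₑ ^ p := by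
  rw [tlpIntegrand, ENNReal.ofReal_add (by positivity) (by positivity),
    ← ENNReal.ofReal_rpow_of_nonneg dist_nonneg hp,
    ← ENNReal.ofReal_rpow_of_nonneg (norm_nonneg _) hp, ← edist_dist, ofReal_norm]

theorem tlpIntegrand_indicator_le {p : ℝ} (hp : 1 ≤ p) {Ω : Set E} {T : Set (E × E)}
    (hT : ∀ z ∉ T, (z.1 ∈ Ω ↔ z.2 ∈ Ω)) (u v : E → F) (z : E × E) :
    tlpIntegrand p (Ω.indicator u) (Ω.indicator v) z
      ≤ 2 ^ (p - 1) * tlpIntegrand p u v z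
        + 2 ^ (p - 1) * T.indicator (fun z => ‖v z.2‖ₑ ^ p) z := by
  have hp0 : 0 < p := by linarith
  have hpow : T.indicator (fun z => ‖v z.2‖ₑ) z ^ p = T.indicator (fun z => ‖v z.2‖ₑ ^ p) z := by
    by_cases hz : z ∈ T <;> simp [hz, ENNReal.zero_rpow_of_pos hp0]
  have hC : 1 ≤ (2 : ℝ≥0∞) ^ (p - 1) := by
    simpa using ENNReal.rpow_le_rpow one_le_two (sub_nonneg.2 hp)
  rw [tlpIntegrand_eq hp0.le, tlpIntegrand_eq hp0.le, ← hpow]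
  calc edist z.1 z.2 ^ p + ‖Ω.indicator u z.1 - Ω.indicator v z.2‖ₑ ^ p
      ≤ edist z.1 z.2 ^ p + (‖u z.1 - v z.2‖ₑ + T.indicator (fun z => ‖v z.2‖ₑ) z) ^ p := by
        gcongr
        exact enorm_indicator_sub_indicator_le hT u v z
    _ ≤ 2 ^ (p - 1) * edist z.1 z.2 ^ p
        + 2 ^ (p - 1) * (‖u z.1 - v z.2‖ₑ ^ p + T.indicator (fun z => ‖v z.2‖ₑ) z ^ p) := by
        gcongr
        · exact le_mul_of_one_le_left' hC
        · exact ENNReal.rpow_add_le_mul_rpow_add_rpow _ _ hp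
    _ = _ := by ring

theorem tendsto_TLpDist_zero_iff [MeasurableSpace E] {p : ℝ} (hp : 0 < p) {ι : Type*}
    {l : Filter ι} {μ ν : ι → Measure E} {f g : ι → E → F} :
    Tendsto (fun i => TLpDist p (μ i) (ν i) (f i) (g i)) l (𝓝 0) ↔
      ∀ θ > 0, ∀ᶠ i in l, ∃ π, IsCoupling π (μ i) (ν i) ∧
        ∫⁻ z, tlpIntegrand p (f i) (g i) z ∂π < θ := by
  have hp' : 0 < 1 / p := one_div_pos.2 hp
  have key : ∀ i θ, TLpDist p (μ i) (ν i) (f i) (g i) < θ ^ (1 / p) ↔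
      ∃ π, IsCoupling π (μ i) (ν i) ∧ ∫⁻ z, tlpIntegrand p (f i) (g i) z ∂π < θ := by
    intro i θ
    simp only [TLpDist, iInf_lt_iff, Subtype.exists, exists_prop, ENNReal.rpow_lt_rpow_iff hp']
    rfl
  rw [ENNReal.nhds_zero_basis.tendsto_right_iff]
  constructor
  · intro h θ hθ
    exact (h _ (ENNReal.rpow_pos_of_nonneg hθ hp'.le)).mono fun i => (key i θ).1
  · intro h a ha
    have ha' : (a ^ p) ^ (1 / p) = a := by rw [one_div, ENNReal.rpow_rpow_inv hp.ne']
    exact (h _ (ENNReal.rpow_pos_of_nonneg ha hp.le)).mono fun i hi => ha' ▸ (key i _).2 hi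

theorem mul_measure_dist_ge_le_lintegral_tlpIntegrand [MeasurableSpace E] [OpensMeasurableSpace E]
    [SecondCountableTopology E] {p : ℝ} (hp : 0 ≤ p) (π : Measure (E × E)) (f g : E → F) (δ : ℝ) :
    ENNReal.ofReal δ ^ p * π {z | δ ≤ dist z.1 z.2} ≤ ∫⁻ z, tlpIntegrand p f g z ∂π := by
  have hfar : MeasurableSet {z : E × E | δ ≤ dist z.1 z.2} :=
    measurableSet_le measurable_const measurable_dist
  calc ENNReal.ofReal δ ^ p * π {z | δ ≤ dist z.1 z.2}
      = ∫⁻ _ in {z | δ ≤ dist z.1 z.2}, ENNReal.ofReal δ ^ p ∂π := by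
        rw [setLIntegral_const, mul_comm]
    _ ≤ ∫⁻ z in {z | δ ≤ dist z.1 z.2}, tlpIntegrand p f g z ∂π := by
        refine setLIntegral_mono' hfar fun z hz => ?_
        rw [tlpIntegrand_eq hp, edist_dist]
        exact le_add_right (ENNReal.rpow_le_rpow (ENNReal.ofReal_le_ofReal hz) hp)
    _ ≤ ∫⁻ z, tlpIntegrand p f g z ∂π := setLIntegral_le_lintegral _ _

end Integrand

section Restriction

variable {E F : Type*} [NormedAddCommGroup E] [NormedSpace ℝ E] [MeasurableSpace E] [BorelSpace E]
  [SecondCountableTopology E] [NormedAddCommGroup F] [MeasurableSpace F] [OpensMeasurableSpace F]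

theorem exists_pos_forall_lintegral_tlpIntegrand_indicator_lt {p : ℝ} (hp : 1 ≤ p)
    {μ : Measure E} [IsFiniteMeasure μ] {Ω : Set E} (hΩ : μ (frontier Ω) = 0) {f : E → F}
    (hf : Measurable f) (hfp : ∫⁻ y, ‖f y‖ₑ ^ p ∂μ ≠ ∞) {η : ℝ≥0∞} (hη : η ≠ 0) :
    ∃ θ > 0, ∀ (π : Measure (E × E)) (u : E → F), π.map Prod.snd = μ →
      ∫⁻ z, tlpIntegrand p u f z ∂π < θ →
        ∫⁻ z, tlpIntegrand p (Ω.indicator u) (Ω.indicator f) z ∂π < η := by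
  have hp0 : 0 < p := by linarith
  set C : ℝ≥0∞ := 2 ^ (p - 1)
  have hC : C ≠ ∞ := ENNReal.rpow_ne_top_of_nonneg (sub_nonneg.2 hp) ofNat_ne_top
  have hη' : η / 2 / C ≠ 0 := (ENNReal.div_pos (ENNReal.half_pos hη).ne' hC).ne'
  obtain ⟨κ, hκ, hsmall⟩ :=
    exists_pos_forall_setLIntegral_comp_lt (hf.enorm.pow_const p) hfp (measurable_snd (α := E)) hη'
  obtain ⟨δ, hδ, hμδ⟩ :=
    exists_pos_measure_cthickening_lt isClosed_frontier hΩ (ENNReal.half_pos hκ.ne')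
  set D : ℝ≥0∞ := ENNReal.ofReal δ ^ p
  have hD0 : D ≠ 0 := (ENNReal.rpow_pos (ENNReal.ofReal_pos.2 hδ) ofReal_ne_top).ne'
  have hDtop : D ≠ ∞ := ENNReal.rpow_ne_top_of_nonneg hp0.le ofReal_ne_top
  refine ⟨min (η / 2 / C) (D * (κ / 2)),
    lt_min (pos_iff_ne_zero.2 hη') (ENNReal.mul_pos hD0 (ENNReal.half_pos hκ.ne').ne'),
    fun π u hπ hJ => ?_⟩
  set S := {z : E × E | δ ≤ dist z.1 z.2} ∪ Prod.snd ⁻¹' cthickening δ (frontier Ω)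
  have hSm : MeasurableSet S := (measurableSet_le measurable_const measurable_dist).union
    (measurable_snd isClosed_cthickening.measurableSet)
  have hS : π S < κ := calc
    π S ≤ π {z | δ ≤ dist z.1 z.2} + π (Prod.snd ⁻¹' cthickening δ (frontier Ω)) :=
        measure_union_le _ _
    _ = π {z | δ ≤ dist z.1 z.2} + μ (cthickening δ (frontier Ω)) := by
        rw [← hπ, Measure.map_apply measurable_snd isClosed_cthickening.measurableSet]
    _ < κ / 2 + κ / 2 := by
        refine ENNReal.add_lt_add ((ENNReal.mul_lt_mul_iff_right hD0 hDtop).1 ?_) hμδ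
        exact (mul_measure_dist_ge_le_lintegral_tlpIntegrand hp0.le π u f δ).trans_lt
          (hJ.trans_le (min_le_right _ _))
    _ = κ := ENNReal.add_halves κ
  have hT : ∀ z ∉ S, (z.1 ∈ Ω ↔ z.2 ∈ Ω) := fun z hz => by
    simp only [S, mem_union, mem_ofPred_eq, mem_preimage, not_or, not_le] at hz
    exact mem_iff_mem_of_dist_le_of_notMem_cthickening hz.1.le hz.2
  calc ∫⁻ z, tlpIntegrand p (Ω.indicator u) (Ω.indicator f) z ∂π
      ≤ ∫⁻ z, (C * tlpIntegrand p u f z + C * S.indicator (fun z => ‖f z.2‖ₑ ^ p) z) ∂π :=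
        lintegral_mono (tlpIntegrand_indicator_le hp hT u f)
    _ = C * ∫⁻ z, tlpIntegrand p u f z ∂π + C * ∫⁻ z in S, ‖f z.2‖ₑ ^ p ∂π := by
        have hg : Measurable fun z : E × E => ‖f z.2‖ₑ ^ p :=
          (hf.comp measurable_snd).enorm.pow_const p
        rw [lintegral_add_right _ ((hg.indicator hSm).const_mul C), lintegral_const_mul' _ _ hC,
          lintegral_const_mul' _ _ hC, lintegral_indicator hSm]
    _ < η / 2 + η / 2 := ENNReal.add_lt_add
        (ENNReal.mul_lt_of_lt_div' (hJ.trans_le (min_le_left _ _)))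
        (ENNReal.mul_lt_of_lt_div' (hsmall π hπ S hS))
    _ = η := ENNReal.add_halves η

end Restriction

theorem TLp_restriction_general (p : ℝ) (hp : 1 ≤ p) (d : ℕ)
    (Ω : Set (EuclideanSpace ℝ (Fin d)))
    (μ : Measure (EuclideanSpace ℝ (Fin d))) (hμ : IsProbabilityMeasure μ)
    (μn : ℕ → Measure (EuclideanSpace ℝ (Fin d)))
    (f : EuclideanSpace ℝ (Fin d) → ℝ) (hf : Measurable f)
    (hfLp : ∫⁻ x, ENNReal.ofReal (|f x| ^ p) ∂μ < ⊤)
    (fn : ℕ → EuclideanSpace ℝ (Fin d) → ℝ)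
    (hbd : μ (frontier Ω) = 0)
    (hconv : Tendsto (fun n => TLpDist p (μn n) μ (fn n) f) atTop (nhds 0)) :
    Tendsto (fun n => TLpDist p (μn n) μ (Ω.indicator (fn n)) (Ω.indicator f))
      atTop (nhds 0) := by
  have hp0 : 0 < p := by linarith
  have hfp : ∫⁻ x, ‖f x‖ₑ ^ p ∂μ ≠ ∞ := by
    simpa [Real.enorm_eq_ofReal_abs, ENNReal.ofReal_rpow_of_nonneg (abs_nonneg _) hp0.le]
      using hfLp.ne
  rw [tendsto_TLpDist_zero_iff hp0] at hconv ⊢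
  intro η hη
  obtain ⟨θ, hθ, hrestrict⟩ :=
    exists_pos_forall_lintegral_tlpIntegrand_indicator_lt hp hbd hf hfp hη.ne'
  filter_upwards [hconv θ hθ] with n ⟨π, hπ, hJ⟩
  exact ⟨π, hπ, hrestrict π (fn n) hπ.2.2 hJ⟩

/-- restriction lemma in `TL^p`: if `μ(∂Ω) = 0` and
`(μₙ, fₙ) → (μ, f)` in `TL^p`, then `(μₙ, fₙ·χ_Ω) → (μ, f·χ_Ω)` in `TL^p`. -/
theorem TLp_restriction (p : ℝ) (hp : 1 ≤ p) (d : ℕ) (hd : 1 ≤ d)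
    (Ω : Set (EuclideanSpace ℝ (Fin d))) (hΩ : MeasurableSet Ω)
    (μ : Measure (EuclideanSpace ℝ (Fin d))) (hμ : IsProbabilityMeasure μ)
    (μn : ℕ → Measure (EuclideanSpace ℝ (Fin d)))
    (hμn : ∀ n, IsProbabilityMeasure (μn n))
    (f : EuclideanSpace ℝ (Fin d) → ℝ) (hf : Measurable f)
    (hfLp : ∫⁻ x, ENNReal.ofReal (|f x| ^ p) ∂μ < ⊤)
    (fn : ℕ → EuclideanSpace ℝ (Fin d) → ℝ) (hfn : ∀ n, Measurable (fn n))
    (hfnLp : ∀ n, ∫⁻ x, ENNReal.ofReal (|fn n x| ^ p) ∂(μn n) < ⊤)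
    (hbd : μ (frontier Ω) = 0)
    (hconv : Tendsto (fun n => TLpDist p (μn n) μ (fn n) f) atTop (nhds 0)) :
    Tendsto (fun n => TLpDist p (μn n) μ (Ω.indicator (fn n)) (Ω.indicator f))
      atTop (nhds 0) :=
  TLp_restriction_general p hp d Ω μ hμ μn f hf hfLp fn hbd hconv
end

section
/- Let d ≥ 1, k ≥ 1, and let V ⊆ ℝ^d be a Borel set. Let μ and μ_n (n ∈ ℕ) be Borel probability measures on ℝ^d, let u : ℝ^d → ℝ^k be Borel measurable with ∫ |u|² dμ < ∞, and let u_n : ℝ^d → ℝ^k be Borel measurable with ∫ |u_n|² dμ_n < ∞ for each n. Assume μ(∂V) = 0, where ∂V is the topological boundary of V, and assume that d_{TL²}((μ_n, u_n), (μ, u)) → 0 as n → ∞. Then d_{TL²}((μ_n, χ_V·u_n), (μ, χ_V·u)) → 0 as n → ∞, where χ_V is the indicator function of V. -/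
/-!
Fix a coupling `π` of `μₙ` and `μ`. Restricting to `V` changes the cost only at pairs `(x, y)`
separated by `V`, and there `‖χ_V uₙ(x) - χ_V u(y)‖² ≤ 2‖uₙ(x) - u(y)‖² + 2‖u(y)‖²`. A separated
pair is either far apart, `|x - y| > δ`, which the transport term pays for, or has `y` within `δ`
of `∂V`, because the segment `[x, y]` crosses `∂V`. Splitting `‖u(y)‖²` at a level `M` gives
`cost' ≤ (2 + 2M²/δ²) cost + 2 ∫_{‖u‖ > M} ‖u‖² dμ + 2M² μ(∂V + B̄_δ)`. Taking the infimum over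
couplings, the first term tends to `0`; the second is small for `M` large since `u ∈ L²(μ)`, and
then the third for `δ` small since `μ(∂V) = 0`.
-/

open MeasureTheory ENNReal Filter

open Topology Metric Set

theorem IsPreconnected.inter_frontier_nonempty {X : Type*} [TopologicalSpace X] {s t : Set X}
    (hs : IsPreconnected s) (hst : (s ∩ t).Nonempty) (hsu : (s \ t).Nonempty) :
    (s ∩ frontier t).Nonempty := by
  by_contra h
  have hcover : s ⊆ interior t ∪ (closure t)ᶜ := fun z hz => by
    by_cases hzt : z ∈ closure t
    · exact Or.inl (not_not.1 fun hzi => h ⟨z, hz, hzt, hzi⟩)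
    · exact Or.inr hzt
  obtain ⟨x, hxs, hxt⟩ := hst
  obtain ⟨y, hys, hyt⟩ := hsu
  obtain ⟨z, -, hzi, hzc⟩ := hs _ _ isOpen_interior isClosed_closure.isOpen_compl hcover
    ⟨x, hxs, (hcover hxs).resolve_right (not_not.2 (subset_closure hxt))⟩
    ⟨y, hys, (hcover hys).resolve_left fun hyi => hyt (interior_subset hyi)⟩
  exact hzc (interior_subset_closure hzi)

theorem mem_cthickening_frontier_of_not_iff {E : Type*} [NormedAddCommGroup E] [NormedSpace ℝ E]
    {V : Set E} {x y : E} (h : ¬(x ∈ V ↔ y ∈ V)) :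
    y ∈ cthickening (dist x y) (frontier V) := by
  wlog hx : x ∈ V generalizing V
  · simpa only [frontier_compl] using this (V := Vᶜ) (by simpa only [mem_compl_iff, not_iff_not])
      (by tauto)
  obtain ⟨c, hc_seg, hc⟩ := (convex_segment x y).isPreconnected.inter_frontier_nonempty
    ⟨x, left_mem_segment ℝ x y, hx⟩ ⟨y, right_mem_segment ℝ x y, by tauto⟩
  refine mem_cthickening_of_dist_le y c _ _ hc ?_
  rw [dist_comm, ← dist_add_dist_of_mem_segment hc_seg]
  exact le_add_of_nonneg_left dist_nonneg

section Indicator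

variable {α F : Type*} [NormedAddCommGroup F] {V : Set α} {x y : α}

theorem norm_indicator_sub_indicator_le_of_iff (f g : α → F) (h : x ∈ V ↔ y ∈ V) :
    ‖V.indicator f x - V.indicator g y‖ ≤ ‖f x - g y‖ := by
  by_cases hx : x ∈ V
  · simp [hx, h.1 hx]
  · simp [hx, mt h.2 hx]

theorem norm_indicator_sub_indicator_le (f g : α → F) :
    ‖V.indicator f x - V.indicator g y‖ ≤ ‖f x - g y‖ + ‖g y‖ := by
  by_cases hx : x ∈ V <;> by_cases hy : y ∈ V
  · simp [hx, hy]
  · simpa [hx, hy] using norm_le_norm_sub_add (f x) (g y)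
  · simp [hx, hy]
  · rw [indicator_of_notMem hx, indicator_of_notMem hy, sub_self, norm_zero]; positivity

end Indicator

section Pointwise

variable {E F : Type*} [NormedAddCommGroup E] [NormedSpace ℝ E] [NormedAddCommGroup F]
  {V : Set E} {g : E → F} {x y : E} {M δ : ℝ}

theorem sq_norm_le_of_not_iff (h : ¬(x ∈ V ↔ y ∈ V)) (hδ : 0 < δ) :
    ‖g y‖ ^ 2 ≤ {y | M < ‖g y‖}.indicator (fun y => ‖g y‖ ^ 2) y +
      M ^ 2 * (dist x y ^ 2 / δ ^ 2 + (cthickening δ (frontier V)).indicator 1 y) := by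
  have hnear : 0 ≤ (cthickening δ (frontier V)).indicator (1 : E → ℝ) y :=
    indicator_nonneg (fun _ _ => zero_le_one) y
  by_cases hM : M < ‖g y‖
  · rw [indicator_of_mem (show y ∈ {y | M < ‖g y‖} from hM)]
    have : 0 ≤ M ^ 2 * (dist x y ^ 2 / δ ^ 2) := by positivity
    nlinarith
  have hgM : ‖g y‖ ^ 2 ≤ M ^ 2 := pow_le_pow_left₀ (norm_nonneg _) (not_lt.1 hM) 2
  rw [indicator_of_notMem (show y ∉ {y | M < ‖g y‖} from hM), zero_add]
  suffices 1 ≤ dist x y ^ 2 / δ ^ 2 + (cthickening δ (frontier V)).indicator 1 y by nlinarith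
  by_cases hxy : dist x y ≤ δ
  · have hy : y ∈ cthickening δ (frontier V) :=
      cthickening_mono hxy _ (mem_cthickening_frontier_of_not_iff h)
    rw [indicator_of_mem hy, Pi.one_apply]
    have : 0 ≤ dist x y ^ 2 / δ ^ 2 := by positivity
    linarith
  · have : 1 ≤ dist x y ^ 2 / δ ^ 2 := by
      rw [one_le_div (by positivity)]
      exact pow_le_pow_left₀ hδ.le (not_le.1 hxy).le 2
    linarith

theorem sq_dist_add_sq_norm_indicator_sub_le (f : E → F) (hδ : 0 < δ) :
    dist x y ^ 2 + ‖V.indicator f x - V.indicator g y‖ ^ 2 ≤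
      (2 + 2 * M ^ 2 / δ ^ 2) * (dist x y ^ 2 + ‖f x - g y‖ ^ 2) +
        2 * ({y | M < ‖g y‖}.indicator (fun y => ‖g y‖ ^ 2) y +
          M ^ 2 * (cthickening δ (frontier V)).indicator 1 y) := by
  by_cases hV : x ∈ V ↔ y ∈ V
  · have hχ : ‖V.indicator f x - V.indicator g y‖ ^ 2 ≤ ‖f x - g y‖ ^ 2 := by
      gcongr; exact norm_indicator_sub_indicator_le_of_iff f g hV
    have htail : 0 ≤ {y | M < ‖g y‖}.indicator (fun y => ‖g y‖ ^ 2) y :=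
      indicator_nonneg (fun _ _ => by positivity) y
    have hnear : 0 ≤ (cthickening δ (frontier V)).indicator (1 : E → ℝ) y :=
      indicator_nonneg (fun _ _ => zero_le_one) y
    have : 0 ≤ 2 * M ^ 2 / δ ^ 2 * (dist x y ^ 2 + ‖f x - g y‖ ^ 2) := by positivity
    linear_combination hχ + this + 2 * htail + 2 * M ^ 2 * hnear + sq_nonneg (dist x y) +
      sq_nonneg ‖f x - g y‖
  · have hmis : ‖V.indicator f x - V.indicator g y‖ ^ 2 ≤ 2 * ‖f x - g y‖ ^ 2 + 2 * ‖g y‖ ^ 2 := by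
      have := norm_indicator_sub_indicator_le (V := V) (x := x) (y := y) f g
      nlinarith [norm_nonneg (V.indicator f x - V.indicator g y), sq_nonneg (‖f x - g y‖ - ‖g y‖)]
    have hgy := sq_norm_le_of_not_iff (g := g) (M := M) hV hδ
    have hfar : M ^ 2 * (dist x y ^ 2 / δ ^ 2) ≤
        M ^ 2 / δ ^ 2 * (dist x y ^ 2 + ‖f x - g y‖ ^ 2) := by
      rw [mul_div_assoc', div_mul_eq_mul_div]
      gcongr
      exact le_add_of_nonneg_right (sq_nonneg _)
    linear_combination hmis + 2 * hgy + 2 * hfar + sq_nonneg (dist x y)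

theorem ofReal_sq_dist_add_sq_norm_indicator_sub_le (f : E → F) (hδ : 0 < δ) :
    ENNReal.ofReal (dist x y ^ 2 + ‖V.indicator f x - V.indicator g y‖ ^ 2) ≤
      ENNReal.ofReal (2 + 2 * M ^ 2 / δ ^ 2) * ENNReal.ofReal (dist x y ^ 2 + ‖f x - g y‖ ^ 2) +
        2 * ({y | M < ‖g y‖}.indicator (fun y => ENNReal.ofReal (‖g y‖ ^ 2)) y +
          ENNReal.ofReal (M ^ 2) * (cthickening δ (frontier V)).indicator 1 y) := by
  set S := {y | M < ‖g y‖}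
  set N := cthickening δ (frontier V)
  have hy : 0 ≤ S.indicator (fun y => ‖g y‖ ^ 2) y + M ^ 2 * N.indicator 1 y :=
    add_nonneg (indicator_nonneg (fun _ _ => sq_nonneg _) y)
      (mul_nonneg (sq_nonneg M) (indicator_nonneg (fun _ _ => zero_le_one) y))
  have hy' : ENNReal.ofReal (S.indicator (fun y => ‖g y‖ ^ 2) y + M ^ 2 * N.indicator 1 y) =
      S.indicator (fun y => ENNReal.ofReal (‖g y‖ ^ 2)) y +
        ENNReal.ofReal (M ^ 2) * N.indicator 1 y := by
    by_cases hyS : y ∈ S <;> by_cases hyN : y ∈ N <;>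
      simp [hyS, hyN, ENNReal.ofReal_add, sq_nonneg]
  rw [← hy', ← ENNReal.ofReal_ofNat 2, ← ENNReal.ofReal_mul (by positivity),
    ← ENNReal.ofReal_mul zero_le_two,
    ← ENNReal.ofReal_add (by positivity) (mul_nonneg zero_le_two hy)]
  exact ENNReal.ofReal_le_ofReal (sq_dist_add_sq_norm_indicator_sub_le f hδ)

end Pointwise

section Coupling

variable {E F : Type*} [MeasurableSpace E] [PseudoMetricSpace E] [NormedAddCommGroup F]

noncomputable def TLpCost (p : ℝ) (π : Measure (E × E)) (f g : E → F) : ℝ≥0∞ :=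
  ∫⁻ z, ENNReal.ofReal (dist z.1 z.2 ^ p + ‖f z.1 - g z.2‖ ^ p) ∂π

theorem TLpDist_rpow_eq_iInf {p : ℝ} (hp : 0 < p) (μ ν : Measure E) (f g : E → F) :
    TLpDist p μ ν f g ^ p = ⨅ π : {π : Measure (E × E) // IsProbabilityMeasure π ∧
      π.map Prod.fst = μ ∧ π.map Prod.snd = ν}, TLpCost p π.1 f g := by
  have := (ENNReal.orderIsoRpow p hp).map_iInf fun π : {π : Measure (E × E) //
    IsProbabilityMeasure π ∧ π.map Prod.fst = μ ∧ π.map Prod.snd = ν} =>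
      TLpCost p π.1 f g ^ (1 / p)
  simp only [ENNReal.orderIsoRpow_apply, ← ENNReal.rpow_mul, one_div_mul_cancel hp.ne',
    ENNReal.rpow_one] at this
  exact this

theorem TLpDist_rpow_le_of_forall_coupling {p : ℝ} (hp : 0 < p) {μ ν : Measure E}
    {f g f' g' : E → F} {c B : ℝ≥0∞} (hc₀ : c ≠ 0) (hc : c ≠ ⊤)
    (h : ∀ π : Measure (E × E), IsProbabilityMeasure π → π.map Prod.fst = μ →
      π.map Prod.snd = ν → TLpCost p π f' g' ≤ c * TLpCost p π f g + B) :
    TLpDist p μ ν f' g' ^ p ≤ c * TLpDist p μ ν f g ^ p + B := by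
  rw [TLpDist_rpow_eq_iInf hp, TLpDist_rpow_eq_iInf hp, ENNReal.mul_iInf_of_ne hc₀ hc,
    ENNReal.iInf_add]
  exact iInf_mono fun π => h π.1 π.2.1 π.2.2.1 π.2.2.2

end Coupling

theorem TLpCost_two_indicator_le {E F : Type*} [NormedAddCommGroup E] [NormedSpace ℝ E]
    [MeasurableSpace E] [OpensMeasurableSpace E] [NormedAddCommGroup F] [MeasurableSpace F]
    [OpensMeasurableSpace F] (V : Set E) (f : E → F) {g : E → F} (hg : Measurable g)
    {μ : Measure E} {π : Measure (E × E)} (hπ : π.map Prod.snd = μ) (M : ℝ) {δ : ℝ}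
    (hδ : 0 < δ) :
    TLpCost 2 π (V.indicator f) (V.indicator g) ≤
      ENNReal.ofReal (2 + 2 * M ^ 2 / δ ^ 2) * TLpCost 2 π f g +
        (2 * ∫⁻ y in {y | M < ‖g y‖}, ENNReal.ofReal (‖g y‖ ^ 2) ∂μ +
          2 * ENNReal.ofReal (M ^ 2) * μ (cthickening δ (frontier V))) := by
  set S := {y | M < ‖g y‖}
  set N := cthickening δ (frontier V)
  have hS : MeasurableSet S := measurableSet_lt measurable_const hg.norm
  have hN : MeasurableSet N := isClosed_cthickening.measurableSet
  set φ : E → ℝ≥0∞ := fun y =>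
    S.indicator (fun y => ENNReal.ofReal (‖g y‖ ^ 2)) y + ENNReal.ofReal (M ^ 2) * N.indicator 1 y
  have htail : Measurable (S.indicator fun y => ENNReal.ofReal (‖g y‖ ^ 2)) :=
    (ENNReal.measurable_ofReal.comp (hg.norm.pow_const 2)).indicator hS
  have hφ : Measurable φ := htail.add (measurable_const.mul (measurable_const.indicator hN))
  have hφ₂ : Measurable fun z : E × E => φ z.2 := hφ.comp measurable_snd
  calc TLpCost 2 π (V.indicator f) (V.indicator g)
      ≤ ∫⁻ z, ENNReal.ofReal (2 + 2 * M ^ 2 / δ ^ 2) *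
          ENNReal.ofReal (dist z.1 z.2 ^ (2 : ℝ) + ‖f z.1 - g z.2‖ ^ (2 : ℝ)) + 2 * φ z.2 ∂π :=
        lintegral_mono fun z => by
          simpa only [Real.rpow_two] using ofReal_sq_dist_add_sq_norm_indicator_sub_le f hδ
    _ = ENNReal.ofReal (2 + 2 * M ^ 2 / δ ^ 2) * TLpCost 2 π f g + 2 * ∫⁻ y, φ y ∂μ := by
        rw [lintegral_add_right _ (hφ₂.const_mul 2), lintegral_const_mul' _ _ ENNReal.ofReal_ne_top,
          lintegral_const_mul _ hφ₂, ← hπ, lintegral_map hφ measurable_snd]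
        rfl
    _ = _ := by
        rw [lintegral_add_left htail,
          lintegral_indicator hS, lintegral_const_mul' _ _ ENNReal.ofReal_ne_top,
          lintegral_indicator_one hN, mul_add, mul_assoc]

theorem tendsto_setLIntegral_lt_atTop {α : Type*} [MeasurableSpace α] {μ : Measure α}
    {h : α → ℝ≥0∞} (hh : Measurable h) (hint : ∫⁻ a, h a ∂μ ≠ ∞) {φ : α → ℝ}
    (hφ : Measurable φ) :
    Tendsto (fun M : ℝ => ∫⁻ a in {a | M < φ a}, h a ∂μ) atTop (𝓝 0) := by
  have hmeas (M : ℝ) : MeasurableSet {a | M < φ a} := measurableSet_lt measurable_const hφ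
  have hlim : ∀ a, Tendsto (fun M : ℝ => {a | M < φ a}.indicator h a) atTop (𝓝 0) := fun a =>
    tendsto_const_nhds.congr' <| (eventually_ge_atTop (φ a)).mono fun M hM =>
      (indicator_of_notMem (show a ∉ {a | M < φ a} from not_lt.2 hM) h).symm
  simpa only [lintegral_indicator (hmeas _), lintegral_zero] using
    tendsto_lintegral_filter_of_dominated_convergence h
      (Eventually.of_forall fun M => hh.indicator (hmeas M))
      (Eventually.of_forall fun M => ae_of_all _ fun a => indicator_le_self _ h a) hint
      (ae_of_all _ hlim)

theorem exists_pos_mul_measure_cthickening_le {X : Type*} [PseudoMetricSpace X]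
    [MeasurableSpace X] [OpensMeasurableSpace X] {μ : Measure X} [IsFiniteMeasure μ]
    {s : Set X} (hs : IsClosed s) (h0 : μ s = 0) {c ε : ℝ≥0∞} (hc : c ≠ ⊤) (hε : 0 < ε) :
    ∃ δ > 0, c * μ (cthickening δ s) ≤ ε := by
  have h := ENNReal.Tendsto.const_mul
    (tendsto_measure_cthickening_of_isClosed ⟨1, one_pos, measure_ne_top μ _⟩ hs) (Or.inr hc)
  rw [h0, mul_zero] at h
  obtain ⟨δ, hδε, hδ⟩ :=
    (((h.mono_left nhdsWithin_le_nhds).eventually (eventually_le_nhds hε)).and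
      (self_mem_nhdsWithin (s := Ioi (0 : ℝ)))).exists
  exact ⟨δ, hδ, hδε⟩

theorem ENNReal.tendsto_rpow_nhds_zero_iff {ι : Type*} {l : Filter ι} {a : ι → ℝ≥0∞} {p : ℝ}
    (hp : 0 < p) : Tendsto (fun i => a i ^ p) l (𝓝 0) ↔ Tendsto a l (𝓝 0) := by
  refine ⟨fun h => ?_, fun h => ?_⟩
  · simpa [Function.comp_def, ENNReal.rpow_rpow_inv hp.ne', hp] using
      (ENNReal.continuous_rpow_const (y := p⁻¹)).tendsto 0 |>.comp h
  · simpa [Function.comp_def, hp] using (ENNReal.continuous_rpow_const (y := p)).tendsto 0 |>.comp h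

theorem TL2_restriction_vector_general (d k : ℕ)
    (V : Set (EuclideanSpace ℝ (Fin d)))
    (μ : Measure (EuclideanSpace ℝ (Fin d))) (hμ : IsProbabilityMeasure μ)
    (μn : ℕ → Measure (EuclideanSpace ℝ (Fin d)))
    (u : EuclideanSpace ℝ (Fin d) → EuclideanSpace ℝ (Fin k)) (hu : Measurable u)
    (huL2 : ∫⁻ x, ENNReal.ofReal (‖u x‖ ^ (2 : ℝ)) ∂μ < ⊤)
    (un : ℕ → EuclideanSpace ℝ (Fin d) → EuclideanSpace ℝ (Fin k))
    (hbd : μ (frontier V) = 0)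
    (hconv : Tendsto (fun n => TLpDist 2 (μn n) μ (un n) u) atTop (nhds 0)) :
    Tendsto (fun n => TLpDist 2 (μn n) μ (V.indicator (un n)) (V.indicator u))
      atTop (nhds 0) := by
  rw [← ENNReal.tendsto_rpow_nhds_zero_iff two_pos] at hconv ⊢
  rw [ENNReal.tendsto_nhds_zero]
  intro ε hε
  have hε3 : 0 < ε / 3 := ENNReal.div_pos hε.ne' ofNat_ne_top
  have htail := tendsto_setLIntegral_lt_atTop (μ := μ) (h := fun x => ENNReal.ofReal (‖u x‖ ^ 2))
    (ENNReal.measurable_ofReal.comp (hu.norm.pow_const 2))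
    (by simpa only [Real.rpow_two] using huL2.ne) hu.norm
  replace htail := ENNReal.Tendsto.const_mul (a := 2) htail (Or.inr ofNat_ne_top)
  rw [mul_zero] at htail
  obtain ⟨M, hM⟩ := (ENNReal.tendsto_nhds_zero.1 htail _ hε3).exists
  obtain ⟨δ, hδ, hN⟩ := exists_pos_mul_measure_cthickening_le isClosed_frontier hbd
    (c := 2 * ENNReal.ofReal (M ^ 2)) (by finiteness) hε3
  replace hconv := ENNReal.Tendsto.const_mul (a := ENNReal.ofReal (2 + 2 * M ^ 2 / δ ^ 2)) hconv
    (Or.inr ENNReal.ofReal_ne_top)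
  rw [mul_zero] at hconv
  filter_upwards [ENNReal.tendsto_nhds_zero.1 hconv _ hε3] with n hn
  calc TLpDist 2 (μn n) μ (V.indicator (un n)) (V.indicator u) ^ (2 : ℝ)
      ≤ ENNReal.ofReal (2 + 2 * M ^ 2 / δ ^ 2) * TLpDist 2 (μn n) μ (un n) u ^ (2 : ℝ) +
          (2 * ∫⁻ y in {y | M < ‖u y‖}, ENNReal.ofReal (‖u y‖ ^ 2) ∂μ +
            2 * ENNReal.ofReal (M ^ 2) * μ (cthickening δ (frontier V))) := by
        refine TLpDist_rpow_le_of_forall_coupling two_pos (by positivity) ENNReal.ofReal_ne_top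
          fun π _ _ hπ => ?_
        exact TLpCost_two_indicator_le V (un n) hu hπ M hδ
    _ ≤ ε / 3 + (ε / 3 + ε / 3) := by gcongr
    _ = ε := by rw [← add_assoc, ENNReal.add_thirds]

/-- vector-valued restriction lemma in `TL²`: if `μ(∂V) = 0` and
`(μₙ, uₙ) → (μ, u)` in `TL²` for `ℝ^k`-valued functions, then
`(μₙ, χ_V·uₙ) → (μ, χ_V·u)` in `TL²`. -/
theorem TL2_restriction_vector (d k : ℕ) (hd : 1 ≤ d) (hk : 1 ≤ k)
    (V : Set (EuclideanSpace ℝ (Fin d))) (hV : MeasurableSet V)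
    (μ : Measure (EuclideanSpace ℝ (Fin d))) (hμ : IsProbabilityMeasure μ)
    (μn : ℕ → Measure (EuclideanSpace ℝ (Fin d)))
    (hμn : ∀ n, IsProbabilityMeasure (μn n))
    (u : EuclideanSpace ℝ (Fin d) → EuclideanSpace ℝ (Fin k)) (hu : Measurable u)
    (huL2 : ∫⁻ x, ENNReal.ofReal (‖u x‖ ^ (2 : ℝ)) ∂μ < ⊤)
    (un : ℕ → EuclideanSpace ℝ (Fin d) → EuclideanSpace ℝ (Fin k))
    (hun : ∀ n, Measurable (un n))
    (hunL2 : ∀ n, ∫⁻ x, ENNReal.ofReal (‖un n x‖ ^ (2 : ℝ)) ∂(μn n) < ⊤)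
    (hbd : μ (frontier V) = 0)
    (hconv : Tendsto (fun n => TLpDist 2 (μn n) μ (un n) u) atTop (nhds 0)) :
    Tendsto (fun n => TLpDist 2 (μn n) μ (V.indicator (un n)) (V.indicator u))
      atTop (nhds 0) :=
  TL2_restriction_vector_general d k V μ hμ μn u hu huL2 un hbd hconv
end

section
/- Let n ≥ 1, k ≥ 1, and let W be a symmetric n × n real matrix with nonnegative entries. Then the infimum, taken over all k-tuples (S_1,…,S_k) of pairwise disjoint subsets of {1,…,n}, of Σ_{ℓ=1}^k λ₁(S_ℓ), equals the infimum, taken over all functions u = (u_1,…,u_k) : {1,…,n} → ℝ^k such that u(i) ∈ Σ_k for every i (i.e., for every i at most one coordinate of u(i) is nonzero) and Σ_{i=1}^n u_ℓ(i)² = 1 for every ℓ ∈ {1,…,k}, of Σ_{ℓ=1}^k E(u_ℓ). Both infima are taken in [0,∞], with the infimum of the empty set equal to ∞. -/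
/-!
A map `u` into `Σ_k` is the same as a `k`-tuple of functions `u_ℓ` with pairwise disjoint
supports. So each competitor `u` of the mapping problem yields the partition by supports,
with `∑ λ₁(supp u_ℓ) ≤ ∑ E(u_ℓ)`. Conversely, for a fixed partition `S`, the sum
`∑ λ₁(S_ℓ)` is an infimum over independent choices of competitors `u_ℓ` supported in `S_ℓ`,
and every such tuple is a map into `Σ_k`.
-/

open Finset

/-- The graph Dirichlet energy `E(u) = ∑_{i,j} W_{ij} (u(i) - u(j))²`. -/
def graphDirichletEnergy {n : ℕ} (W : Matrix (Fin n) (Fin n) ℝ)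
    (u : Fin n → ℝ) : ℝ :=
  ∑ i, ∑ j, W i j * (u i - u j) ^ 2

/-- The Dirichlet energy `λ₁(S)` of a subset `S` of vertices: the infimum in
`[0,∞]` of the Dirichlet energies of unit-norm functions supported in `S`
(so `λ₁(∅) = ∞`). -/
noncomputable def graphLambdaOne {n : ℕ} (W : Matrix (Fin n) (Fin n) ℝ)
    (S : Set (Fin n)) : ENNReal :=
  sInf {e : ENNReal | ∃ u : Fin n → ℝ, (∀ i, i ∉ S → u i = 0) ∧
    (∑ i, (u i) ^ 2 = 1) ∧ e = ENNReal.ofReal (graphDirichletEnergy W u)}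

lemma graphDirichletEnergy_nonneg {n : ℕ} {W : Matrix (Fin n) (Fin n) ℝ}
    (hW : ∀ i j, 0 ≤ W i j) (u : Fin n → ℝ) : 0 ≤ graphDirichletEnergy W u :=
  sum_nonneg fun i _ => sum_nonneg fun j _ => mul_nonneg (hW i j) (sq_nonneg _)

theorem ENNReal.sum_iInf_eq_iInf_sum {α β : Type*} [Nonempty β] (s : Finset α)
    (g : α → β → ENNReal) : ∑ a ∈ s, ⨅ b, g a b = ⨅ v : α → β, ∑ a ∈ s, g a (v a) := by
  classical
  have heval : ∀ a, ⨅ v : α → β, g a (v a) = ⨅ b, g a b := fun a =>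
    (Function.surjective_eval (β := fun _ => β) a).iInf_comp (g a)
  simp only [← heval]
  refine (ENNReal.iInf_sum fun _ v w => ?_).symm
  refine ⟨fun a => if g a (v a) ≤ g a (w a) then v a else w a, fun a _ => ?_⟩
  dsimp only
  split_ifs with h
  · exact ⟨le_rfl, h⟩
  · exact ⟨(not_le.1 h).le, le_rfl⟩

/-- Giving inadmissible competitors the value `⊤` makes `λ₁(S)` an unconstrained infimum. -/
noncomputable def graphConstrainedEnergy {n : ℕ} (W : Matrix (Fin n) (Fin n) ℝ)
    (S : Set (Fin n)) (u : Fin n → ℝ) : ENNReal :=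
  open Classical in
  if (∀ i, i ∉ S → u i = 0) ∧ ∑ i, u i ^ 2 = 1 then ENNReal.ofReal (graphDirichletEnergy W u)
  else ⊤

lemma graphLambdaOne_eq_iInf {n : ℕ} (W : Matrix (Fin n) (Fin n) ℝ) (S : Set (Fin n)) :
    graphLambdaOne W S = ⨅ u, graphConstrainedEnergy W S u := by
  apply le_antisymm
  · refine le_iInf fun u => ?_
    unfold graphConstrainedEnergy
    split_ifs with hu
    · exact sInf_le ⟨u, hu.1, hu.2, rfl⟩
    · exact le_top
  · refine le_sInf ?_
    rintro _ ⟨u, hsupp, hnorm, rfl⟩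
    exact iInf_le_of_le u (by rw [graphConstrainedEnergy, if_pos ⟨hsupp, hnorm⟩])

lemma singular_sum_eq_zero_iff {ι : Type*} [Fintype ι] [DecidableEq ι] (x : ι → ℝ) :
    ∑ ℓ, ∑ m, (if ℓ = m then 0 else x ℓ ^ 2 * x m ^ 2) = 0 ↔
      Pairwise fun ℓ m => x ℓ = 0 ∨ x m = 0 := by
  have hterm : ∀ ℓ m, 0 ≤ if ℓ = m then (0 : ℝ) else x ℓ ^ 2 * x m ^ 2 := by
    intro ℓ m; split_ifs <;> positivity
  rw [sum_eq_zero_iff_of_nonneg fun ℓ _ => sum_nonneg fun m _ => hterm ℓ m]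
  simp only [mem_univ, forall_const, sum_eq_zero_iff_of_nonneg fun m _ => hterm _ m]
  refine forall_congr' fun ℓ => forall_congr' fun m => ?_
  by_cases h : ℓ = m <;> simp [h]

lemma pairwise_disjoint_support_iff {ι κ : Type*} (u : ι → κ → ℝ) :
    Pairwise (Function.onFun Disjoint fun ℓ => Function.support fun i => u i ℓ) ↔
      ∀ i, Pairwise fun ℓ m => u i ℓ = 0 ∨ u i m = 0 := by
  simp only [Pairwise, Function.onFun, Set.disjoint_left, Function.mem_support]
  grind

theorem graph_dirichlet_partition_eq_mapping_general (n k : ℕ)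
    (W : Matrix (Fin n) (Fin n) ℝ)
    (hnonneg : ∀ i j, 0 ≤ W i j) :
    sInf {e : ENNReal | ∃ S : Fin k → Set (Fin n),
        Pairwise (Function.onFun Disjoint S) ∧
        e = ∑ ℓ, graphLambdaOne W (S ℓ)}
    = sInf {e : ENNReal | ∃ u : Fin n → Fin k → ℝ,
        (∀ i, ∑ ℓ, ∑ m, (if ℓ = m then 0 else (u i ℓ) ^ 2 * (u i m) ^ 2) = 0) ∧
        (∀ ℓ, ∑ i, (u i ℓ) ^ 2 = 1) ∧
        e = ENNReal.ofReal
          (∑ ℓ, graphDirichletEnergy W (fun i => u i ℓ))} := by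
  have hsum : ∀ v : Fin k → Fin n → ℝ, ENNReal.ofReal (∑ ℓ, graphDirichletEnergy W (v ℓ)) =
      ∑ ℓ, ENNReal.ofReal (graphDirichletEnergy W (v ℓ)) := fun v =>
    ENNReal.ofReal_sum_of_nonneg fun ℓ _ => graphDirichletEnergy_nonneg hnonneg (v ℓ)
  simp only [singular_sum_eq_zero_iff]
  apply le_antisymm
  · refine le_sInf ?_
    rintro _ ⟨u, hsing, hnorm, rfl⟩
    refine sInf_le_of_le ⟨_, (pairwise_disjoint_support_iff u).2 hsing, rfl⟩ ?_
    rw [hsum fun ℓ i => u i ℓ]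
    refine sum_le_sum fun ℓ _ => sInf_le ⟨_, fun i hi => ?_, hnorm ℓ, rfl⟩
    simpa using hi
  · refine le_sInf ?_
    rintro _ ⟨S, hdisj, rfl⟩
    simp only [graphLambdaOne_eq_iInf, ENNReal.sum_iInf_eq_iInf_sum]
    refine le_iInf fun v => ?_
    by_cases hadm : ∀ ℓ, (∀ i, i ∉ S ℓ → v ℓ i = 0) ∧ ∑ i, v ℓ i ^ 2 = 1
    · have hsupp : ∀ ℓ, (Function.support fun i => v ℓ i) ⊆ S ℓ := fun ℓ i hi =>
        by_contra fun h => hi ((hadm ℓ).1 i h)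
      refine sInf_le_of_le ⟨fun i ℓ => v ℓ i, (pairwise_disjoint_support_iff _).1
        fun ℓ m hlm => (hdisj hlm).mono (hsupp ℓ) (hsupp m), fun ℓ => (hadm ℓ).2, rfl⟩ ?_
      exact (hsum v).le.trans (sum_le_sum fun ℓ _ => (if_pos (hadm ℓ)).ge)
    · obtain ⟨ℓ, hℓ⟩ := not_forall.1 hadm
      have htop : graphConstrainedEnergy W (S ℓ) (v ℓ) = ⊤ := if_neg hℓ
      rw [ENNReal.sum_eq_top.2 ⟨ℓ, mem_univ ℓ, htop⟩]
      exact le_top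

/-- the discrete Dirichlet `k`-partition problem is equivalent to
the discrete mapping problem into the singular space
`Σ_k = {x ∈ ℝ^k : ∑_{i ≠ j} x_i² x_j² = 0}`: the two infima in `[0,∞]` agree. -/
theorem graph_dirichlet_partition_eq_mapping (n k : ℕ) (hn : 1 ≤ n) (hk : 1 ≤ k)
    (W : Matrix (Fin n) (Fin n) ℝ) (hsymm : ∀ i j, W i j = W j i)
    (hnonneg : ∀ i j, 0 ≤ W i j) :
    sInf {e : ENNReal | ∃ S : Fin k → Set (Fin n),
        Pairwise (Function.onFun Disjoint S) ∧
        e = ∑ ℓ, graphLambdaOne W (S ℓ)}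
    = sInf {e : ENNReal | ∃ u : Fin n → Fin k → ℝ,
        (∀ i, ∑ ℓ, ∑ m, (if ℓ = m then 0 else (u i ℓ) ^ 2 * (u i m) ^ 2) = 0) ∧
        (∀ ℓ, ∑ i, (u i ℓ) ^ 2 = 1) ∧
        e = ENNReal.ofReal
          (∑ ℓ, graphDirichletEnergy W (fun i => u i ℓ))} :=
  graph_dirichlet_partition_eq_mapping_general n k W hnonneg
end
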